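/- If A is an irreducible real n×n matrix with nonnegative off-diagonal entries, then there exists a strictly positive vector v (all components > 0) with A v = s(A) v. -/

import Mathlib

/-!
Shifting `A` by a multiple of the identity makes it entrywise nonnegative, so it suffices to treat
a nonnegative irreducible `B`. The Collatz–Wielandt set of levels `t` with `t • x ≤ B x` for some
nonzero `x ≥ 0` has a greatest element `r`: normalising `x` to the standard simplex turns the
supremum into a maximum over a compact set. Irreducibility makes `(1 + B) ^ (n - 1)` send every
nonzero `x ≥ 0` to a positive vector; since this matrix commutes with `B`, a maximiser `u` with
`B u ≠ r u` would yield a larger level, so `B u = r u` and `(1 + B) ^ (n - 1) u` is a positive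
eigenvector. Finally, if `A x = μ x` over `ℂ`, the triangle inequality gives
`μ.re • |x| ≤ A |x|`, so `μ.re ≤ r`: the maximal level is the spectral bound.
-/

open Matrix Finset

/-- A matrix is irreducible if there is no nontrivial subset `S` of indices with
`A i j = 0` for all `i ∈ S`, `j ∉ S`. -/
def MatIrreducible {n : ℕ} (A : Matrix (Fin n) (Fin n) ℝ) : Prop :=
  ¬ ∃ S : Set (Fin n), S.Nonempty ∧ Sᶜ.Nonempty ∧ ∀ i ∈ S, ∀ j ∉ S, A i j = 0

section CollatzWielandt

variable {ι : Type*} [Fintype ι]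

def collatzWielandtSet (B : Matrix ι ι ℝ) : Set ℝ :=
  {t | ∃ x : ι → ℝ, 0 ≤ x ∧ x ≠ 0 ∧ t • x ≤ B *ᵥ x}

lemma mem_collatzWielandtSet_add_smul_one_iff [DecidableEq ι] {A : Matrix ι ι ℝ} {c t : ℝ} :
    t + c ∈ collatzWielandtSet (A + c • 1) ↔ t ∈ collatzWielandtSet A := by
  simp only [collatzWielandtSet, Set.mem_ofPred_eq, add_mulVec, smul_mulVec, one_mulVec,
    add_smul, add_le_add_iff_right]

variable {B : Matrix ι ι ℝ}

lemma mulVec_nonneg (hB : ∀ i j, 0 ≤ B i j) {v : ι → ℝ} (hv : 0 ≤ v) : 0 ≤ B *ᵥ v :=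
  fun i => sum_nonneg fun j _ => mul_nonneg (hB i j) (hv j)

lemma le_one_add_mulVec [DecidableEq ι] (hB : ∀ i j, 0 ≤ B i j) {v : ι → ℝ} (hv : 0 ≤ v) :
    v ≤ (1 + B) *ᵥ v := by
  rw [add_mulVec, one_mulVec]
  exact le_add_of_nonneg_right (mulVec_nonneg hB hv)

lemma le_one_add_pow_mulVec [DecidableEq ι] (hB : ∀ i j, 0 ≤ B i j) {v : ι → ℝ} (hv : 0 ≤ v)
    (k : ℕ) : v ≤ (1 + B) ^ k *ᵥ v := by
  induction k with
  | zero => simp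
  | succ k ih =>
    rw [pow_succ', ← mulVec_mulVec]
    exact ih.trans (le_one_add_mulVec hB (hv.trans ih))

lemma le_sum_sum_of_smul_le_mulVec (hB : ∀ i j, 0 ≤ B i j) {t : ℝ} {u : ι → ℝ}
    (hu : u ∈ stdSimplex ℝ ι) (h : t • u ≤ B *ᵥ u) : t ≤ ∑ i, ∑ j, B i j :=
  calc t = ∑ i, t * u i := by rw [← mul_sum, hu.2, mul_one]
    _ ≤ ∑ i, (B *ᵥ u) i := sum_le_sum fun i _ => h i
    _ ≤ ∑ i, ∑ j, B i j := sum_le_sum fun i _ => sum_le_sum fun j _ =>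
      mul_le_of_le_one_right (hB i j) (mem_Icc_of_mem_stdSimplex hu j).2

lemma inv_sum_smul_mem_stdSimplex {x : ι → ℝ} (hx : 0 ≤ x) (hx0 : x ≠ 0) :
    (∑ i, x i)⁻¹ • x ∈ stdSimplex ℝ ι := by
  obtain ⟨j, hj⟩ := (Pi.lt_def.1 (hx.lt_of_ne' hx0)).2
  have hsum : 0 < ∑ i, x i := sum_pos' (fun i _ => hx i) ⟨j, mem_univ j, hj⟩
  refine ⟨fun i => smul_nonneg (inv_nonneg.2 hsum.le) (hx i), ?_⟩
  simp only [Pi.smul_apply, smul_eq_mul, ← mul_sum, inv_mul_cancel₀ hsum.ne']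

lemma exists_isGreatest_collatzWielandtSet [Nonempty ι] (hB : ∀ i j, 0 ≤ B i j) :
    ∃ r, IsGreatest (collatzWielandtSet B) r := by
  classical
  set K : Set ((ι → ℝ) × ℝ) := {p | p.1 ∈ stdSimplex ℝ ι ∧ 0 ≤ p.2 ∧ p.2 • p.1 ≤ B *ᵥ p.1}
  have hK : IsCompact K := by
    refine IsCompact.of_isClosed_subset
      ((isCompact_stdSimplex ℝ ι).prod (isCompact_Icc (a := 0) (b := ∑ i, ∑ j, B i j))) ?_
      fun p hp => ⟨hp.1, hp.2.1, le_sum_sum_of_smul_le_mulVec hB hp.1 hp.2.2⟩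
    exact ((isClosed_stdSimplex ℝ ι).preimage continuous_fst).inter <|
      (isClosed_le continuous_const continuous_snd).inter <|
      isClosed_le (continuous_snd.smul continuous_fst) (continuous_const.matrix_mulVec continuous_fst)
  obtain ⟨i⟩ := ‹Nonempty ι›
  have hK0 : (Pi.single i 1, 0) ∈ K := ⟨single_mem_stdSimplex ℝ i, le_rfl,
    by simpa using mulVec_nonneg hB (single_mem_stdSimplex ℝ i).1⟩
  obtain ⟨⟨u, r⟩, ⟨hu, hr, hru⟩, hmax⟩ := hK.exists_isMaxOn ⟨_, hK0⟩ continuous_snd.continuousOn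
  refine ⟨r, ⟨u, hu.1, ?_, hru⟩, ?_⟩
  · rintro rfl
    simpa using hu.2
  rintro t ⟨x, hx, hx0, htx⟩
  rcases le_total t 0 with ht | ht
  · exact ht.trans hr
  refine hmax (a := ((∑ i, x i)⁻¹ • x, t)) ⟨inv_sum_smul_mem_stdSimplex hx hx0, ht, ?_⟩
  rw [mulVec_smul, smul_comm]
  exact smul_le_smul_of_nonneg_left htx (inv_nonneg.2 (sum_nonneg fun i _ => hx i))

end CollatzWielandt

lemma exists_lt_smul_le_of_forall_mul_lt {ι : Type*} [Finite ι] [Nonempty ι] {w v : ι → ℝ}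
    (hw : ∀ i, 0 < w i) {r : ℝ} (h : ∀ i, r * w i < v i) : ∃ t, r < t ∧ t • w ≤ v := by
  obtain ⟨i₀, hi₀⟩ := Finite.exists_min fun i => v i / w i
  exact ⟨v i₀ / w i₀, (lt_div_iff₀ (hw i₀)).2 (h i₀), fun i => (le_div_iff₀ (hw i)).1 (hi₀ i)⟩

namespace MatIrreducible

variable {n : ℕ} {A B : Matrix (Fin n) (Fin n) ℝ}

lemma of_offDiag_eq (hA : MatIrreducible A) (h : ∀ i j, i ≠ j → A i j = B i j) :
    MatIrreducible B := by
  rintro ⟨S, hS, hSc, h0⟩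
  exact hA ⟨S, hS, hSc, fun i hi j hj =>
    (h i j (ne_of_mem_of_not_mem hi hj)).trans (h0 i hi j hj)⟩

lemma exists_eq_zero_and_mulVec_pos (hirr : MatIrreducible B) (hB : ∀ i j, 0 ≤ B i j)
    {v : Fin n → ℝ} (hv : 0 ≤ v) {i j : Fin n} (hi : v i = 0) (hj : 0 < v j) :
    ∃ k, v k = 0 ∧ 0 < (B *ᵥ v) k := by
  by_contra! h
  refine hirr ⟨{k | v k = 0}, ⟨i, hi⟩, ⟨j, hj.ne'⟩, fun k hk l hl => ?_⟩
  have hkl : B k l * v l ≤ 0 :=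
    (single_le_sum (fun m _ => mul_nonneg (hB k m) (hv m)) (mem_univ l)).trans (h k hk)
  exact le_antisymm (nonpos_of_mul_nonpos_left hkl ((hv l).lt_of_ne' hl)) (hB k l)

lemma card_zeros_one_add_mulVec_le (hirr : MatIrreducible B) (hB : ∀ i j, 0 ≤ B i j)
    {v : Fin n → ℝ} (hv : 0 ≤ v) (hv0 : v ≠ 0) :
    #{k | ((1 + B) *ᵥ v) k = 0} ≤ #{k | v k = 0} - 1 := by
  have hsub : ({k | ((1 + B) *ᵥ v) k = 0} : Finset (Fin n)) ⊆ ({k | v k = 0} : Finset _) := by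
    intro k
    simp only [mem_filter, mem_univ, true_and]
    exact fun hk => le_antisymm (hk ▸ le_one_add_mulVec hB hv k) (hv k)
  rcases eq_empty_or_nonempty ({k | v k = 0} : Finset (Fin n)) with h | ⟨i, hi⟩
  · rw [h] at hsub ⊢
    rw [subset_empty.1 hsub]
    rfl
  obtain ⟨j, hj⟩ := (Pi.lt_def.1 (hv.lt_of_ne' hv0)).2
  obtain ⟨k, hk, hBk⟩ := hirr.exists_eq_zero_and_mulVec_pos hB hv (by simpa using hi) hj
  have : #{k | ((1 + B) *ᵥ v) k = 0} < #{k | v k = 0} := by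
    refine card_lt_card ((ssubset_iff_of_subset hsub).2 ⟨k, by simpa using hk, ?_⟩)
    simp [add_mulVec, hk, hBk.ne']
  omega

lemma one_add_pow_mulVec_pos (hirr : MatIrreducible B) (hB : ∀ i j, 0 ≤ B i j)
    {u : Fin n → ℝ} (hu : 0 ≤ u) (hu0 : u ≠ 0) (i : Fin n) :
    0 < ((1 + B) ^ (n - 1) *ᵥ u) i := by
  have hcard : ∀ k, #{i | ((1 + B) ^ k *ᵥ u) i = 0} ≤ n - 1 - k := by
    intro k
    induction k with
    | zero =>
      obtain ⟨j, hj⟩ := (Pi.lt_def.1 (hu.lt_of_ne' hu0)).2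
      have : #{i | u i = 0} < n := by
        simpa using card_lt_card ((filter_ssubset (s := univ)).2 ⟨j, mem_univ j, hj.ne'⟩)
      simpa using Nat.le_sub_one_of_lt this
    | succ k ih =>
      have hle := le_one_add_pow_mulVec hB hu k
      have hne : (1 + B) ^ k *ᵥ u ≠ 0 := fun h => hu0 (le_antisymm (h ▸ hle) hu)
      rw [pow_succ', ← mulVec_mulVec]
      have := hirr.card_zeros_one_add_mulVec_le hB (hu.trans hle) hne
      omega
  have hzero : ({i | ((1 + B) ^ (n - 1) *ᵥ u) i = 0} : Finset (Fin n)) = ∅ := by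
    simpa using hcard (n - 1)
  have hi : ((1 + B) ^ (n - 1) *ᵥ u) i ≠ 0 := by
    simpa using (filter_eq_empty_iff.1 hzero) (mem_univ i)
  exact (hu.trans (le_one_add_pow_mulVec hB hu _) i).lt_of_ne' hi

lemma exists_pos_eigenvector_of_isGreatest (hirr : MatIrreducible B) (hB : ∀ i j, 0 ≤ B i j)
    {r : ℝ} (hr : IsGreatest (collatzWielandtSet B) r) :
    ∃ w : Fin n → ℝ, (∀ i, 0 < w i) ∧ B *ᵥ w = r • w := by
  obtain ⟨u, hu, hu0, hru⟩ := hr.1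
  set C := (1 + B) ^ (n - 1)
  have hC : ∀ v, B *ᵥ (C *ᵥ v) = C *ᵥ (B *ᵥ v) := fun v => by
    rw [mulVec_mulVec, mulVec_mulVec, (((Commute.one_left B).add_left (.refl B)).pow_left _).eq]
  have hw : ∀ i, 0 < (C *ᵥ u) i := hirr.one_add_pow_mulVec_pos hB hu hu0
  refine ⟨C *ᵥ u, hw, ?_⟩
  obtain ⟨j, -⟩ := Function.ne_iff.1 hu0
  have : Nonempty (Fin n) := ⟨j⟩
  -- `C` maps a nonzero defect `B u - r u ≥ 0` to a positive vector, so `r` could be increased.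
  have hBu : B *ᵥ u = r • u := by
    by_contra hne
    have hz : 0 ≤ B *ᵥ u - r • u := sub_nonneg.2 hru
    obtain ⟨t, hrt, ht⟩ := exists_lt_smul_le_of_forall_mul_lt hw fun i => by
      have := hirr.one_add_pow_mulVec_pos hB hz (sub_ne_zero.2 hne) i
      rwa [mulVec_sub, mulVec_smul, ← hC, Pi.sub_apply, sub_pos] at this
    exact hrt.not_ge (hr.2 ⟨_, fun i => (hw i).le, fun h => (hw j).ne' (congrFun h j), ht⟩)
  rw [hC, hBu, mulVec_smul]

theorem exists_pos_eigenvector_of_offDiag_nonneg (hirr : MatIrreducible A) (hn : 0 < n)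
    (hoff : ∀ i j, i ≠ j → 0 ≤ A i j) :
    ∃ r, IsGreatest (collatzWielandtSet A) r ∧
      ∃ w : Fin n → ℝ, (∀ i, 0 < w i) ∧ A *ᵥ w = r • w := by
  have : Nonempty (Fin n) := ⟨⟨0, hn⟩⟩
  set c := ∑ i, |A i i|
  have hB : ∀ i j, 0 ≤ (A + c • 1) i j := by
    intro i j
    rcases eq_or_ne i j with rfl | hij
    · have := single_le_sum (fun k _ => abs_nonneg (A k k)) (mem_univ i)
      simp only [Matrix.add_apply, Matrix.smul_apply, one_apply_eq, smul_eq_mul, mul_one]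
      linarith [neg_abs_le (A i i)]
    · simpa [hij] using hoff i j hij
  have hirrB : MatIrreducible (A + c • 1) := hirr.of_offDiag_eq fun i j hij => by simp [hij]
  obtain ⟨r, hr⟩ := exists_isGreatest_collatzWielandtSet hB
  obtain ⟨w, hw, hBw⟩ := hirrB.exists_pos_eigenvector_of_isGreatest hB hr
  refine ⟨r - c, ⟨?_, fun t ht => ?_⟩, w, hw, ?_⟩
  · exact mem_collatzWielandtSet_add_smul_one_iff.1 (by rw [sub_add_cancel]; exact hr.1)
  · exact le_sub_iff_add_le.2 (hr.2 (mem_collatzWielandtSet_add_smul_one_iff.2 ht))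
  · rw [add_mulVec, smul_mulVec, one_mulVec] at hBw
    rw [sub_smul, ← hBw, add_sub_cancel_right]

end MatIrreducible

lemma Matrix.mem_spectrum_iff_exists_mulVec_eq_smul {ι K : Type*} [Fintype ι] [DecidableEq ι]
    [Field K] {M : Matrix ι ι K} {μ : K} : μ ∈ spectrum K M ↔ ∃ x ≠ 0, M *ᵥ x = μ • x := by
  rw [← Matrix.spectrum_toLin', ← Module.End.hasEigenvalue_iff_mem_spectrum]
  constructor
  · intro h
    obtain ⟨x, hx⟩ := h.exists_hasEigenvector
    exact ⟨x, hx.2, by simpa using Module.End.mem_eigenspace_iff.1 hx.1⟩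
  · rintro ⟨x, hx0, hx⟩
    exact Module.End.hasEigenvalue_of_hasEigenvector
      ⟨Module.End.mem_eigenspace_iff.2 (by simpa using hx), hx0⟩

section Spectrum

variable {ι : Type*} [Fintype ι] [DecidableEq ι] {A : Matrix ι ι ℝ}

lemma ofReal_mem_spectrum_map_ofReal {r : ℝ} {w : ι → ℝ} (hw : w ≠ 0) (hAw : A *ᵥ w = r • w) :
    (r : ℂ) ∈ spectrum ℂ (A.map (fun r => (r : ℂ))) := by
  refine Matrix.mem_spectrum_iff_exists_mulVec_eq_smul.2 ⟨fun i => (w i : ℂ), ?_, ?_⟩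
  · simpa [funext_iff] using hw
  · ext i
    exact (Complex.ofRealHom.map_mulVec A w i).symm.trans (by simp [hAw])

lemma re_mem_collatzWielandtSet (hoff : ∀ i j, i ≠ j → 0 ≤ A i j) {μ : ℂ}
    (hμ : μ ∈ spectrum ℂ (A.map (fun r => (r : ℂ)))) : μ.re ∈ collatzWielandtSet A := by
  obtain ⟨x, hx0, hx⟩ := Matrix.mem_spectrum_iff_exists_mulVec_eq_smul.1 hμ
  refine ⟨fun i => ‖x i‖, fun i => norm_nonneg _, fun h => hx0 ?_, fun i => ?_⟩
  · simpa [funext_iff] using h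
  have hrow : (μ - A i i) * x i = ∑ j ∈ univ.erase i, A i j * x j := by
    have := congrFun hx i
    simp only [mulVec, dotProduct, map_apply, Pi.smul_apply, smul_eq_mul] at this
    rw [← add_sum_erase _ _ (mem_univ i)] at this
    linear_combination -this
  calc μ.re * ‖x i‖ = A i i * ‖x i‖ + (μ - A i i).re * ‖x i‖ := by simp; ring
    _ ≤ A i i * ‖x i‖ + ‖(μ - A i i) * x i‖ := by
      rw [norm_mul]; gcongr; exact Complex.re_le_norm _
    _ ≤ A i i * ‖x i‖ + ∑ j ∈ univ.erase i, A i j * ‖x j‖ := by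
      rw [hrow]
      gcongr
      refine (norm_sum_le _ _).trans (sum_le_sum fun j hj => ?_)
      rw [norm_mul, Complex.norm_real, Real.norm_of_nonneg (hoff i j (ne_of_mem_erase hj).symm)]
    _ = (A *ᵥ fun j => ‖x j‖) i := add_sum_erase _ (fun j => A i j * ‖x j‖) (mem_univ i)

end Spectrum

/-- If `A` is an irreducible real `n×n` matrix with nonnegative
off-diagonal entries, then there exists a strictly positive vector `v` with
`A v = s(A) v`. -/
theorem exists_positive_eigenvector_of_spectral_bound (n : ℕ) (hn : 0 < n)
    (A : Matrix (Fin n) (Fin n) ℝ)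
    (hoff : ∀ i j, i ≠ j → 0 ≤ A i j)
    (hirr : MatIrreducible A)
    (s : ℝ)
    (hs : IsGreatest {x : ℝ | ∃ μ ∈ spectrum ℂ (A.map (fun r => (r : ℂ))), x = μ.re} s) :
    ∃ v : Fin n → ℝ, (∀ i, 0 < v i) ∧ A.mulVec v = s • v := by
  obtain ⟨r, hr, w, hw, hAw⟩ := hirr.exists_pos_eigenvector_of_offDiag_nonneg hn hoff
  have hw0 : w ≠ 0 := fun h => (hw ⟨0, hn⟩).ne' (congrFun h _)
  have hs_eq : s = r := hs.unique
    ⟨⟨r, ofReal_mem_spectrum_map_ofReal hw0 hAw, (Complex.ofReal_re r).symm⟩,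
      by rintro _ ⟨μ, hμ, rfl⟩; exact hr.2 (re_mem_collatzWielandtSet hoff hμ)⟩
  exact ⟨w, hw, hs_eq ▸ hAw⟩
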